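/- Let S ∈ 𝔪 satisfy tr(S²) = 0 and suppose the characteristic polynomial of S has n distinct roots in ℂ. Then the real vector subspace 𝔟 := {X ∈ 𝔰𝔲(p,q) : there exists c ∈ ℝ with [X,S] = c·S} of Mat_n(ℂ) has real dimension n − 1. -/

import Mathlib

/-
Write `J = I_{p,q}` and `σ A = J Aᴴ J`, so that `𝔲(p,q) = {A | σ A = -A}` and `σ S = S`.
Conjugating into an eigenbasis of `S`, where `S` is diagonal with distinct entries, a matrix
commuting with `S` is diagonal, hence a commutator `[X, S]` that commutes with `S` (such as `c • S`)
vanishes. So `𝔟` is the set of trace-free `X ∈ 𝔲(p,q)` commuting with `S`. The complex centralizer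
of `S` has dimension `n`, and `σ` is a conjugate-linear involution of it, so its `-1`-eigenspace
(the centralizer of `S` in `𝔲(p,q)`) is a real form of real dimension `n`. On that space the trace
is purely imaginary and `tr (i • 1) = i n ≠ 0`, so imposing trace zero drops the dimension by one.
-/

open Matrix

/-- The diagonal matrix `I_{p,q}` with `p` ones followed by `q` minus-ones, over `ℂ`. -/
noncomputable def Ipq (p q : ℕ) : Matrix (Fin (p + q)) (Fin (p + q)) ℂ :=
  Matrix.diagonal (fun i => if (i : ℕ) < p then (1 : ℂ) else -1)

open Polynomial Module Complex

theorem Subalgebra.map_centralizer_singleton {R A B : Type*} [CommRing R] [Ring A]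
    [Ring B] [Algebra R A] [Algebra R B] (e : A ≃ₐ[R] B) (a : A) :
    (Subalgebra.centralizer R {a}).map (e : A →ₐ[R] B) = Subalgebra.centralizer R {e a} := by
  ext b
  obtain ⟨b, rfl⟩ := e.surjective b
  simp only [Subalgebra.mem_map, Subalgebra.mem_centralizer_iff, Set.mem_singleton_iff, forall_eq,
    AlgEquiv.coe_toAlgHom, e.injective.eq_iff, exists_eq_right, ← map_mul]

theorem AlgEquiv.finrank_centralizer_singleton_apply {R A B : Type*} [CommRing R] [Ring A]
    [Ring B] [Algebra R A] [Algebra R B] (e : A ≃ₐ[R] B) (a : A) :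
    finrank R (Subalgebra.centralizer R {e a}) = finrank R (Subalgebra.centralizer R {a}) := by
  rw [← Subalgebra.map_centralizer_singleton]
  exact (e.subalgebraMap _).toLinearEquiv.finrank_eq.symm

namespace Matrix

variable {n K : Type*} [Fintype n] [DecidableEq n] [Field K]

theorem isDiag_of_commute_diagonal {d : n → K} (hd : Function.Injective d) {A : Matrix n n K}
    (hA : Commute A (diagonal d)) : A.IsDiag := by
  intro i j hij
  have hij' := congrFun (congrFun hA.eq i) j
  rw [mul_diagonal, diagonal_mul] at hij'
  have : A i j * (d j - d i) = 0 := by linear_combination hij'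
  exact (mul_eq_zero.mp this).resolve_right (sub_ne_zero.mpr (hd.ne (Ne.symm hij)))

theorem commute_of_commute_sub_diagonal {d : n → K} (hd : Function.Injective d)
    {A : Matrix n n K} (hA : Commute (A * diagonal d - diagonal d * A) (diagonal d)) :
    Commute A (diagonal d) := by
  have hdiag : (A * diagonal d - diagonal d * A).diag = 0 := by
    ext i
    simp [mul_comm]
  rw [commute_iff_eq, ← sub_eq_zero, ← (isDiag_of_commute_diagonal hd hA).diagonal_diag, hdiag,
    diagonal_zero']

theorem toSubmodule_centralizer_diagonal {d : n → K} (hd : Function.Injective d) :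
    Subalgebra.toSubmodule (Subalgebra.centralizer K {diagonal d}) =
      LinearMap.range (diagonalLinearMap n K K) := by
  ext A
  simp only [Subalgebra.mem_toSubmodule, Subalgebra.mem_centralizer_iff, Set.mem_singleton_iff,
    forall_eq, LinearMap.mem_range, diagonalLinearMap_apply]
  constructor
  · intro hA
    exact ⟨A.diag, (isDiag_of_commute_diagonal hd hA.symm).diagonal_diag⟩
  · rintro ⟨a, rfl⟩
    exact (commute_diagonal d a).eq

theorem finrank_centralizer_diagonal {d : n → K} (hd : Function.Injective d) :
    finrank K (Subalgebra.centralizer K {diagonal d}) = Fintype.card n := by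
  rw [← Subalgebra.finrank_toSubmodule, toSubmodule_centralizer_diagonal hd,
    LinearMap.finrank_range_of_inj diagonal_injective, finrank_fintype_fun_eq_card]

theorem exists_algEquiv_apply_eq_diagonal {S : Matrix n n K} {lam : n → K}
    (hlam : Function.Injective lam) (hchar : S.charpoly = ∏ i, (X - C (lam i))) :
    ∃ e : Matrix n n K ≃ₐ[K] Matrix n n K, e S = diagonal lam := by
  have hev : ∀ i, End.HasEigenvalue (toLin' S) (lam i) := fun i => by
    rw [End.hasEigenvalue_iff_isRoot_charpoly, charpoly_toLin', hchar, IsRoot, eval_prod]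
    exact Finset.prod_eq_zero (Finset.mem_univ i) (by simp)
  choose v hv using fun i => (hev i).exists_hasEigenvector
  have hli : LinearIndependent K v := End.eigenvectors_linearIndependent' _ lam hlam v hv
  let b := basisOfLinearIndependentOfCardEqFinrank' v hli (finrank_fintype_fun_eq_card K).symm
  refine ⟨toLinAlgEquiv'.trans (LinearMap.toMatrixAlgEquiv b), ?_⟩
  have hb : ∀ j, S *ᵥ b j = lam j • b j := fun j => by
    simpa [b] using (hv j).apply_eq_smul
  ext i j
  rw [AlgEquiv.trans_apply, LinearMap.toMatrixAlgEquiv_apply, toLinAlgEquiv'_apply, hb, map_smul,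
    b.repr_self]
  by_cases h : i = j
  · subst h; simp
  · simp [h]

theorem commute_of_commute_sub_of_charpoly_eq_prod {S : Matrix n n K} {lam : n → K}
    (hlam : Function.Injective lam) (hchar : S.charpoly = ∏ i, (X - C (lam i))) {A : Matrix n n K}
    (hA : Commute (A * S - S * A) S) : Commute A S := by
  obtain ⟨e, he⟩ := exists_algEquiv_apply_eq_diagonal hlam hchar
  have h := commute_of_commute_sub_diagonal hlam (by simpa [he] using hA.map e)
  simpa [← he] using h.map e.symm

theorem finrank_centralizer_of_charpoly_eq_prod {S : Matrix n n K} {lam : n → K}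
    (hlam : Function.Injective lam) (hchar : S.charpoly = ∏ i, (X - C (lam i))) :
    finrank K (Subalgebra.centralizer K {S}) = Fintype.card n := by
  obtain ⟨e, he⟩ := exists_algEquiv_apply_eq_diagonal hlam hchar
  rw [← e.finrank_centralizer_singleton_apply, he, finrank_centralizer_diagonal hlam]

end Matrix

section RealForm

variable {V : Type*} [AddCommGroup V] [Module ℂ V] [Module ℝ V] [IsScalarTower ℝ ℂ V]

theorem finrank_real_inf_eigenspace_one_of_antilinear [FiniteDimensional ℝ V]
    (C : Submodule ℂ V) (τ : V →ₗ[ℝ] V) (hτI : ∀ v, τ (I • v) = -(I • τ v)) (hτ : ∀ v, τ (τ v) = v)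
    (hC : ∀ v ∈ C, τ v ∈ C) :
    finrank ℝ ↥(C.restrictScalars ℝ ⊓ End.eigenspace τ 1) = finrank ℂ C := by
  set F := C.restrictScalars ℝ ⊓ End.eigenspace τ 1
  have mem_F : ∀ {v}, v ∈ F ↔ v ∈ C ∧ τ v = v := by
    intro v
    simp [F]
  -- `(x, y) ↦ x + I • y` identifies two copies of the `τ`-fixed part of `C` with `C`.
  let Ψ : F × F →ₗ[ℝ] V :=
    F.subtype.coprod ((LinearMap.lsmul ℂ V I).restrictScalars ℝ ∘ₗ F.subtype)
  have hΨ : ∀ z : F × F, Ψ z = z.1 + I • (z.2 : V) := fun z => rfl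
  have hinj : Function.Injective Ψ := by
    rw [← LinearMap.ker_eq_bot, LinearMap.ker_eq_bot']
    rintro ⟨⟨x, hx⟩, ⟨y, hy⟩⟩ h
    change x + I • y = 0 at h
    have hτx := (mem_F.mp hx).2
    have hτy := (mem_F.mp hy).2
    have h' : x - I • y = 0 := by
      simpa [hτI, hτx, hτy, sub_eq_add_neg] using congrArg τ h
    have hx0 : x = 0 := by
      have h2 : (2 : ℝ) • x = (x + I • y) + (x - I • y) := by module
      rw [h, h', add_zero] at h2
      exact (smul_eq_zero.mp h2).resolve_left two_ne_zero
    have hy0 : y = 0 := by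
      rw [hx0, zero_add, smul_eq_zero] at h
      exact h.resolve_left I_ne_zero
    subst hx0 hy0
    rfl
  have hrange : LinearMap.range Ψ = C.restrictScalars ℝ := by
    apply le_antisymm
    · rintro _ ⟨⟨⟨x, hx⟩, ⟨y, hy⟩⟩, rfl⟩
      exact C.add_mem (mem_F.mp hx).1 (C.smul_mem I (mem_F.mp hy).1)
    · intro v hv
      have hτv := hC v hv
      have hx : (1 / 2 : ℝ) • (v + τ v) ∈ F := mem_F.mpr
        ⟨(C.restrictScalars ℝ).smul_mem _ (C.add_mem hv hτv), by simp [hτ, add_comm]⟩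
      have hy : (1 / 2 : ℝ) • (-I • (v - τ v)) ∈ F := mem_F.mpr
        ⟨(C.restrictScalars ℝ).smul_mem _ (C.smul_mem _ (C.sub_mem hv hτv)), by
          simp only [map_smul, neg_smul, map_neg, hτI, map_sub, hτ]
          module⟩
      exact ⟨(⟨_, hx⟩, ⟨_, hy⟩), by
        rw [hΨ]
        match_scalars
        · linear_combination (-1 / 2 : ℂ) * I_sq
        · linear_combination (1 / 2 : ℂ) * I_sq⟩
  have hC2 : finrank ℝ (C.restrictScalars ℝ) = 2 * finrank ℂ C := by
    rw [((Submodule.restrictScalarsEquiv ℝ ℂ V C).restrictScalars ℝ).finrank_eq,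
      ← Module.finrank_mul_finrank ℝ ℂ C, Complex.finrank_real_complex]
  have := (LinearEquiv.ofInjective Ψ hinj).finrank_eq
  rw [hrange, hC2, Module.finrank_prod] at this
  omega

end RealForm

theorem Submodule.finrank_inf_ker_add_one {K V : Type*} [Field K] [AddCommGroup V] [Module K V]
    {F : Submodule K V} [FiniteDimensional K F] (ℓ : Dual K V) {v : V} (hv : v ∈ F)
    (hℓ : ℓ v ≠ 0) : finrank K ↥(F ⊓ LinearMap.ker ℓ) + 1 = finrank K F := by
  have hne : ℓ.domRestrict F ≠ 0 := fun h => hℓ (LinearMap.congr_fun h ⟨v, hv⟩)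
  rw [← Dual.finrank_ker_add_one_of_ne_zero hne, LinearMap.ker_domRestrict,
    ← Submodule.finrank_map_subtype_eq, Submodule.map_comap_subtype]

theorem Ipq_mul_self (p q : ℕ) : Ipq p q * Ipq p q = 1 := by
  rw [Ipq, diagonal_mul_diagonal, ← diagonal_one]
  congr 1
  ext i
  split_ifs <;> norm_num

theorem conjTranspose_Ipq (p q : ℕ) : (Ipq p q)ᴴ = Ipq p q := by
  rw [Ipq, diagonal_conjTranspose]
  congr 1
  ext i
  split_ifs with h <;> simp [h]

namespace Matrix

variable {n : Type*} [Fintype n]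

/-- The adjoint for the Hermitian form `xᴴ J y`, when `J * J = 1`. -/
noncomputable def indefiniteAdjoint (J : Matrix n n ℂ) : Matrix n n ℂ →ₗ[ℝ] Matrix n n ℂ where
  toFun A := J * Aᴴ * J
  map_add' A B := by simp [mul_add, add_mul]
  map_smul' r A := by simp

variable {J : Matrix n n ℂ}

theorem indefiniteAdjoint_apply (A : Matrix n n ℂ) : indefiniteAdjoint J A = J * Aᴴ * J := rfl

theorem indefiniteAdjoint_I_smul (A : Matrix n n ℂ) :
    indefiniteAdjoint J (I • A) = -(I • indefiniteAdjoint J A) := by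
  simp [indefiniteAdjoint_apply]

variable [DecidableEq n]

noncomputable def unitaryCentralizer (J S : Matrix n n ℂ) : Submodule ℝ (Matrix n n ℂ) :=
  (Subalgebra.toSubmodule (Subalgebra.centralizer ℂ {S})).restrictScalars ℝ ⊓
    End.eigenspace (-indefiniteAdjoint J) 1

theorem mem_unitaryCentralizer {S A : Matrix n n ℂ} :
    A ∈ unitaryCentralizer J S ↔ S * A = A * S ∧ -indefiniteAdjoint J A = A := by
  simp [unitaryCentralizer, Subalgebra.mem_centralizer_iff]

variable (hJ : J * J = 1)
include hJ

theorem indefiniteAdjoint_mul (A B : Matrix n n ℂ) :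
    indefiniteAdjoint J (A * B) = indefiniteAdjoint J B * indefiniteAdjoint J A := by
  simp only [indefiniteAdjoint_apply, conjTranspose_mul]
  calc J * (Bᴴ * Aᴴ) * J = J * Bᴴ * (J * J) * Aᴴ * J := by rw [hJ]; noncomm_ring
    _ = _ := by noncomm_ring

theorem indefiniteAdjoint_indefiniteAdjoint (hJH : Jᴴ = J) (A : Matrix n n ℂ) :
    indefiniteAdjoint J (indefiniteAdjoint J A) = A := by
  simp only [indefiniteAdjoint_apply, conjTranspose_mul, conjTranspose_conjTranspose, hJH]
  calc J * (J * (A * J)) * J = (J * J) * A * (J * J) := by noncomm_ring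
    _ = A := by rw [hJ, one_mul, mul_one]

theorem trace_indefiniteAdjoint (A : Matrix n n ℂ) :
    trace (indefiniteAdjoint J A) = star (trace A) := by
  rw [indefiniteAdjoint_apply, trace_mul_cycle, hJ, one_mul, trace_conjTranspose]

theorem re_trace_eq_zero_of_neg_indefiniteAdjoint_eq {A : Matrix n n ℂ}
    (hA : -indefiniteAdjoint J A = A) : (trace A).re = 0 := by
  have h := congrArg (fun X => (trace X).re) hA
  simp only [trace_neg, trace_indefiniteAdjoint hJ, neg_re, star_def, conj_re] at h
  linarith

theorem conjTranspose_mul_add_mul_eq_zero_iff (A : Matrix n n ℂ) :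
    Aᴴ * J + J * A = 0 ↔ -indefiniteAdjoint J A = A := by
  have h : Aᴴ * J + J * A = J * (indefiniteAdjoint J A + A) := by
    rw [indefiniteAdjoint_apply, mul_add, ← mul_assoc, ← mul_assoc, hJ, one_mul]
  rw [h, neg_eq_iff_add_eq_zero]
  constructor
  · intro h0
    rw [← one_mul (_ + A), ← hJ, mul_assoc, h0, mul_zero]
  · intro h0
    rw [h0, mul_zero]

theorem indefiniteAdjoint_mem_centralizer {S A : Matrix n n ℂ} (hS : indefiniteAdjoint J S = S)
    (hA : A ∈ Subalgebra.centralizer ℂ {S}) :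
    indefiniteAdjoint J A ∈ Subalgebra.centralizer ℂ {S} := by
  simp only [Subalgebra.mem_centralizer_iff, Set.mem_singleton_iff, forall_eq] at hA ⊢
  rw [← hS, ← indefiniteAdjoint_mul hJ, ← indefiniteAdjoint_mul hJ, hA]

theorem I_smul_one_mem_unitaryCentralizer (S : Matrix n n ℂ) :
    I • (1 : Matrix n n ℂ) ∈ unitaryCentralizer J S :=
  mem_unitaryCentralizer.mpr ⟨by simp, by simp [indefiniteAdjoint_apply, hJ]⟩

theorem finrank_unitaryCentralizer (hJH : Jᴴ = J) {S : Matrix n n ℂ}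
    (hS : indefiniteAdjoint J S = S) {lam : n → ℂ} (hlam : Function.Injective lam)
    (hchar : S.charpoly = ∏ i, (X - C (lam i))) :
    finrank ℝ (unitaryCentralizer J S) = Fintype.card n := by
  rw [unitaryCentralizer, finrank_real_inf_eigenspace_one_of_antilinear _ (-indefiniteAdjoint J),
    Subalgebra.finrank_toSubmodule, finrank_centralizer_of_charpoly_eq_prod hlam hchar]
  · intro A
    simp [indefiniteAdjoint_I_smul]
  · intro A
    simp [indefiniteAdjoint_indefiniteAdjoint hJ hJH]
  · intro A hA
    exact neg_mem (indefiniteAdjoint_mem_centralizer hJ hS hA)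

theorem setOf_eq_unitaryCentralizer_inf_ker_im_trace {S : Matrix n n ℂ} {lam : n → ℂ}
    (hlam : Function.Injective lam) (hchar : S.charpoly = ∏ i, (X - C (lam i))) :
    {A : Matrix n n ℂ | (trace A = 0 ∧ Aᴴ * J + J * A = 0) ∧ ∃ c : ℝ, A * S - S * A = c • S} =
      ↑(unitaryCentralizer J S ⊓ LinearMap.ker (imLm ∘ₗ traceLinearMap n ℝ ℂ)) := by
  ext A
  simp only [Set.mem_ofPred_eq, SetLike.mem_coe, Submodule.mem_inf, mem_unitaryCentralizer,
    LinearMap.mem_ker, LinearMap.comp_apply, traceLinearMap_apply, imLm_coe,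
    conjTranspose_mul_add_mul_eq_zero_iff hJ]
  constructor
  · rintro ⟨⟨htr, hσA⟩, c, hc⟩
    have hAS : Commute A S := commute_of_commute_sub_of_charpoly_eq_prod hlam hchar
      (hc ▸ (Commute.refl S).smul_left c)
    exact ⟨⟨hAS.eq.symm, hσA⟩, by simp [htr]⟩
  · rintro ⟨⟨hAS, hσA⟩, him⟩
    exact ⟨⟨Complex.ext (re_trace_eq_zero_of_neg_indefiniteAdjoint_eq hJ hσA) him, hσA⟩, 0,
      by rw [hAS, sub_self, zero_smul]⟩

end Matrix

theorem stmt2 (p q : ℕ) (hn : 3 ≤ p + q)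
    (S : Matrix (Fin (p + q)) (Fin (p + q)) ℂ)
    (hSm : Sᴴ * Ipq p q = Ipq p q * S)
    (hdist : ∃ lam : Fin (p + q) → ℂ, Function.Injective lam ∧
      S.charpoly = ∏ i, (Polynomial.X - Polynomial.C (lam i))) :
    Module.finrank ℝ ↥(Submodule.span ℝ
      {A : Matrix (Fin (p + q)) (Fin (p + q)) ℂ |
        (Matrix.trace A = 0 ∧ Aᴴ * Ipq p q + Ipq p q * A = 0) ∧
        ∃ c : ℝ, A * S - S * A = c • S}) = p + q - 1 := by
  obtain ⟨lam, hlam, hchar⟩ := hdist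
  have hJ := Ipq_mul_self p q
  have hS : indefiniteAdjoint (Ipq p q) S = S := by
    rw [indefiniteAdjoint_apply, mul_assoc, hSm, ← mul_assoc, hJ, one_mul]
  have him :
      (imLm ∘ₗ traceLinearMap _ ℝ ℂ) (I • 1 : Matrix (Fin (p + q)) (Fin (p + q)) ℂ) ≠ 0 := by
    simpa using (Nat.cast_ne_zero.mpr (by omega) : ((p + q : ℕ) : ℝ) ≠ 0)
  have hdim := Submodule.finrank_inf_ker_add_one _ (I_smul_one_mem_unitaryCentralizer hJ S) him
  rw [finrank_unitaryCentralizer hJ (conjTranspose_Ipq p q) hS hlam hchar, Fintype.card_fin]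
    at hdim
  rw [setOf_eq_unitaryCentralizer_inf_ker_im_trace hJ hlam hchar, Submodule.span_eq]
  omega
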